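/- Let E be a Banach space and let (𝒯(t))_{t≥0} be a τ_sot-bi-continuous semigroup on the Banach space 𝓛(E) with generator (𝒜,dom(𝒜)). Then the following are equivalent: (i) dom(𝒜) is a right ideal of 𝓛(E) and 𝒜 is a right 𝓛(E)-module homomorphism, i.e., C ∈ dom(𝒜) and B ∈ 𝓛(E) imply C∘B ∈ dom(𝒜) and 𝒜(C∘B) = 𝒜(C)∘B; (ii) the semigroup (𝒯(t)) is left implemented, i.e., there exists a C₀-semigroup (S(t))_{t≥0} on E such that 𝒯(t)C = S(t)∘C for all t ≥ 0 and C ∈ 𝓛(E). In this case S(t) = 𝒯(t)(Id). -/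

import Mathlib

open Set Filter Topology

variable {E : Type*} [NormedAddCommGroup E] [NormedSpace ℝ E]

/-- A `C₀`-semigroup on a Banach space `E`. -/
structure IsC0Semigroup (T : ℝ → E →L[ℝ] E) : Prop where
  map_zero : T 0 = 1
  map_add : ∀ s t : ℝ, 0 ≤ s → 0 ≤ t → T (s + t) = (T s).comp (T t)
  strongCont : ∀ x : E, ContinuousOn (fun t => T t x) (Ici (0:ℝ))

/-- A `τ_sot`-bi-continuous semigroup on `𝓛(E)`. -/
structure IsBiContSotSemigroup (U : ℝ → (E →L[ℝ] E) →L[ℝ] (E →L[ℝ] E)) : Prop where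
  map_zero : U 0 = 1
  map_add : ∀ s t : ℝ, 0 ≤ s → 0 ≤ t → U (s + t) = (U s).comp (U t)
  strongCont : ∀ (C : E →L[ℝ] E) (x : E), ContinuousOn (fun t => (U t C) x) (Ici (0:ℝ))
  expBound : ∃ M : ℝ, 1 ≤ M ∧ ∃ ω : ℝ, ∀ t : ℝ, 0 ≤ t → ‖U t‖ ≤ M * Real.exp (ω * t)
  biequi : ∀ t₀ : ℝ, 0 < t₀ → ∀ u : ℕ → E →L[ℝ] E, (∃ c : ℝ, ∀ n, ‖u n‖ ≤ c) →
    (∀ x : E, Tendsto (fun n => u n x) atTop (nhds (0:E))) →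
    ∀ x : E, ∀ ε > (0:ℝ), ∃ N : ℕ, ∀ n ≥ N, ∀ t ∈ Icc (0:ℝ) t₀, ‖(U t (u n)) x‖ < ε

/-- The generator relation of a `τ_sot`-bi-continuous semigroup on `𝓛(E)`:
`Y = 𝒜 C` iff the difference quotients converge strongly and are norm-bounded. -/
def SotGenRel (U : ℝ → (E →L[ℝ] E) →L[ℝ] (E →L[ℝ] E)) (C Y : E →L[ℝ] E) : Prop :=
  (∀ x : E, Tendsto (fun t : ℝ => t⁻¹ • ((U t C) x - C x)) (nhdsWithin 0 (Ioi 0)) (nhds (Y x))) ∧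
    ∃ M : ℝ, ∀ t ∈ Ioc (0:ℝ) 1, ‖U t C - C‖ ≤ M * t

/-!
(ii) ⇒ (i) is immediate, since `𝒯(t)(C ∘ B) = S(t) ∘ C ∘ B`. For (i) ⇒ (ii), take `C ∈ dom 𝒜`.
For fixed `t`, `B` and `x`, the map `s ↦ 𝒯(t - s)(𝒯(s)C ∘ B) x` has right derivative
`𝒯(t - s)(𝒜(𝒯(s)C) ∘ B - 𝒜(𝒯(s)C ∘ B)) x`, which vanishes by (i). So the map is constant on
`[0, t]`, and `𝒯(t)(C ∘ B) = 𝒯(t)C ∘ B`. The averages `r⁻¹ ∫₀ʳ 𝒯(s)C ds` lie in `dom 𝒜` and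
converge to `C` in `τ_sot` with bounded norms as `r → 0⁺`, and bi-equicontinuity carries the
identity over to the limit. Thus it holds for every `C`, and for `C = Id` it says that
`S(t) := 𝒯(t)(Id)` left implements `𝒯`.
-/

open MeasureTheory

section RealIntegrals

variable {F : Type*} [NormedAddCommGroup F] [NormedSpace ℝ F] [CompleteSpace F]

theorem tendsto_inv_smul_integral_add {f : ℝ → F} {a : ℝ} (hf : ContinuousOn f (Ici a)) :
    Tendsto (fun h => h⁻¹ • ∫ s in a..a + h, f s) (𝓝[>] 0) (𝓝 (f a)) := by
  have hderiv : HasDerivWithinAt (fun u => ∫ s in a..u, f s) (f a) (Ici a) a :=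
    intervalIntegral.integral_hasDerivWithinAt_right (t := Ioi a) (by simp)
      ((hf.stronglyMeasurableAtFilter_nhdsWithin measurableSet_Ici a).filter_mono
        (nhdsWithin_mono _ Ioi_subset_Ici_self))
      ((hf a self_mem_Ici).mono Ioi_subset_Ici_self)
  rw [hasDerivWithinAt_iff_tendsto_slope, Ici_sdiff_left] at hderiv
  have hshift : Tendsto (fun h => a + h) (𝓝[>] 0) (𝓝[>] a) :=
    tendsto_nhdsWithin_iff.2
      ⟨((continuous_const_add a).tendsto' 0 a (add_zero a)).mono_left nhdsWithin_le_nhds,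
        eventually_nhdsWithin_of_forall fun h (hh : 0 < h) => by simpa using hh⟩
  refine (hderiv.comp hshift).congr fun h => ?_
  simp [slope_def_module]

theorem norm_smul_sub_integral_le {f : ℝ → F} {a b η : ℝ} (hab : a ≤ b)
    (hf : IntervalIntegrable f volume a b) (hη : ∀ s ∈ Ioc a b, ‖f a - f s‖ ≤ η) :
    ‖(b - a) • f a - ∫ s in a..b, f s‖ ≤ η * (b - a) := by
  rw [← intervalIntegral.integral_const,
    ← intervalIntegral.integral_sub intervalIntegrable_const hf]
  refine (intervalIntegral.norm_integral_le_of_norm_le_const fun s hs => ?_).trans_eq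
    (by rw [abs_of_nonneg (sub_nonneg.2 hab)])
  exact hη s (by rwa [uIoc_of_le hab] at hs)

theorem tendsto_riemannSum_integral {f : ℝ → F} {a b : ℝ} (hab : a ≤ b)
    (hf : ContinuousOn f (Icc a b)) :
    Tendsto (fun n : ℕ => ((b - a) / n) • ∑ i ∈ Finset.range n, f (a + i * ((b - a) / n)))
      atTop (𝓝 (∫ s in a..b, f s)) := by
  rw [Metric.tendsto_atTop]
  intro ε hε
  set η := ε / (b - a + 1)
  obtain ⟨δ, hδ, hfδ⟩ := Metric.uniformContinuousOn_iff_le.1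
    (isCompact_Icc.uniformContinuousOn_of_continuous hf) η (by positivity)
  obtain ⟨N, hN⟩ := exists_nat_gt ((b - a) / δ)
  refine ⟨N + 1, fun n hn => ?_⟩
  have hn0 : (0:ℝ) < n := by exact_mod_cast (by omega : 0 < n)
  set h := (b - a) / n
  set x : ℕ → ℝ := fun i => a + i * h
  have hh : 0 ≤ h := by positivity
  have hhδ : h ≤ δ := by
    rw [div_le_iff₀ hn0, mul_comm, ← div_le_iff₀ hδ]
    exact hN.le.trans (by exact_mod_cast (by omega : N ≤ n))
  have hstep : ∀ i, x (i + 1) - x i = h := fun i => by simp only [x]; push_cast; ring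
  have hxn : x n = b := by simp only [x, h]; field_simp; ring
  have hx_mem : ∀ i ≤ n, x i ∈ Icc a b := fun i hi =>
    ⟨le_add_of_nonneg_right (by positivity), hxn ▸ by simp only [x]; gcongr⟩
  have hint : ∀ i < n, IntervalIntegrable f volume (x i) (x (i + 1)) := fun i hi =>
    (hf.mono (uIcc_subset_Icc (hx_mem i hi.le) (hx_mem (i + 1) hi))).intervalIntegrable
  have hpiece : ∀ i < n, ‖h • f (x i) - ∫ s in x i..x (i + 1), f s‖ ≤ η * h := by
    intro i hi
    rw [← hstep i]
    refine norm_smul_sub_integral_le (by linarith [hstep i]) (hint i hi) fun s hs => ?_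
    rw [← dist_eq_norm]
    refine hfδ _ (hx_mem i hi.le) s
      ⟨(hx_mem i hi.le).1.trans hs.1.le, hs.2.trans (hx_mem (i + 1) hi).2⟩ ?_
    rw [Real.dist_eq, abs_of_nonpos (by linarith [hs.1])]
    linarith [hs.2, hstep i]
  have hsplit : ∫ s in a..b, f s = ∑ i ∈ Finset.range n, ∫ s in x i..x (i + 1), f s := by
    rw [intervalIntegral.sum_integral_adjacent_intervals hint, hxn]
    simp [x]
  rw [dist_eq_norm, hsplit, Finset.smul_sum, ← Finset.sum_sub_distrib]
  calc ‖∑ i ∈ Finset.range n, (h • f (x i) - ∫ s in x i..x (i + 1), f s)‖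
      ≤ ∑ i ∈ Finset.range n, η * h :=
        (norm_sum_le _ _).trans (Finset.sum_le_sum fun i hi => hpiece i (Finset.mem_range.1 hi))
    _ = ε * ((b - a) / (b - a + 1)) := by
        simp only [Finset.sum_const, Finset.card_range, nsmul_eq_mul, η, h]
        field_simp
    _ < ε := mul_lt_of_lt_one_right hε ((div_lt_one (by linarith)).2 (by linarith))

end RealIntegrals

variable {𝒯 : ℝ → (E →L[ℝ] E) →L[ℝ] (E →L[ℝ] E)}

/-- Condition (i): `dom 𝒜` is a right ideal of `𝓛(E)` and `𝒜 (C ∘ B) = 𝒜 C ∘ B`. -/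
def GeneratorIsRightModuleHom (𝒯 : ℝ → (E →L[ℝ] E) →L[ℝ] (E →L[ℝ] E)) : Prop :=
  ∀ C Y : E →L[ℝ] E, SotGenRel 𝒯 C Y → ∀ B : E →L[ℝ] E, SotGenRel 𝒯 (C.comp B) (Y.comp B)

def IsLeftImplementedBy (𝒯 : ℝ → (E →L[ℝ] E) →L[ℝ] (E →L[ℝ] E)) (S : ℝ → E →L[ℝ] E) : Prop :=
  ∀ t : ℝ, 0 ≤ t → ∀ C : E →L[ℝ] E, 𝒯 t C = (S t).comp C

namespace SotGenRel

variable {C Y : E →L[ℝ] E}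

theorem tendsto_smul_sub (hC : SotGenRel 𝒯 C Y) (y : E) :
    Tendsto (fun h : ℝ => (h⁻¹ • (𝒯 h C - C)) y) (𝓝[>] 0) (𝓝 (Y y)) := by
  simpa using hC.1 y

theorem exists_eventually_norm_le (hC : SotGenRel 𝒯 C Y) :
    ∃ M, ∀ᶠ h : ℝ in 𝓝[>] 0, ‖h⁻¹ • (𝒯 h C - C)‖ ≤ M := by
  obtain ⟨M, hM⟩ := hC.2
  refine ⟨M, ?_⟩
  filter_upwards [Ioc_mem_nhdsGT one_pos] with h hh
  rw [norm_smul, norm_inv, Real.norm_of_nonneg hh.1.le, inv_mul_le_iff₀ hh.1, mul_comm]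
  exact hM h hh

theorem smul (hC : SotGenRel 𝒯 C Y) (a : ℝ) : SotGenRel 𝒯 (a • C) (a • Y) := by
  obtain ⟨M, hM⟩ := hC.2
  refine ⟨fun x => ?_, ⟨|a| * M, fun h hh => ?_⟩⟩
  · simpa [smul_sub, smul_comm a] using (hC.1 x).const_smul a
  · rw [map_smul, ← smul_sub, norm_smul, Real.norm_eq_abs, mul_assoc]
    exact mul_le_mul_of_nonneg_left (hM h hh) (abs_nonneg a)

end SotGenRel

theorem norm_integral_apply_le {K t₀ : ℝ}
    (hK : ∀ s ∈ Icc 0 t₀, ‖𝒯 s‖ ≤ K) (C : E →L[ℝ] E) (x : E) {a b : ℝ} (ha : 0 ≤ a)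
    (hab : a ≤ b) (hb : b ≤ t₀) :
    ‖∫ s in a..b, 𝒯 s C x‖ ≤ K * ‖C‖ * ‖x‖ * (b - a) := by
  refine (intervalIntegral.norm_integral_le_of_norm_le_const fun s hs => ?_).trans_eq
    (by rw [abs_of_nonneg (sub_nonneg.2 hab)])
  rw [uIoc_of_le hab] at hs
  exact (𝒯 s C).le_of_opNorm_le ((𝒯 s).le_of_opNorm_le (hK s ⟨by linarith [hs.1], by
    linarith [hs.2]⟩) C) x

namespace IsBiContSotSemigroup

theorem apply_add (h𝒯 : IsBiContSotSemigroup 𝒯) {s t : ℝ} (hs : 0 ≤ s) (ht : 0 ≤ t)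
    (C : E →L[ℝ] E) : 𝒯 (s + t) C = 𝒯 s (𝒯 t C) := by
  rw [h𝒯.map_add s t hs ht]
  rfl

theorem apply_comm (h𝒯 : IsBiContSotSemigroup 𝒯) {s t : ℝ} (hs : 0 ≤ s) (ht : 0 ≤ t)
    (C : E →L[ℝ] E) : 𝒯 s (𝒯 t C) = 𝒯 t (𝒯 s C) := by
  rw [← h𝒯.apply_add hs ht, add_comm, h𝒯.apply_add ht hs]

theorem exists_norm_le (h𝒯 : IsBiContSotSemigroup 𝒯) (t₀ : ℝ) :
    ∃ K, 0 ≤ K ∧ ∀ s ∈ Icc 0 t₀, ‖𝒯 s‖ ≤ K := by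
  obtain ⟨M, hM, ω, hb⟩ := h𝒯.expBound
  refine ⟨M * Real.exp (|ω| * |t₀|), by positivity, fun s hs => (hb s hs.1).trans ?_⟩
  have hωs : ω * s ≤ |ω| * |t₀| :=
    calc ω * s ≤ |ω| * s := mul_le_mul_of_nonneg_right (le_abs_self ω) hs.1
      _ ≤ |ω| * |t₀| := by gcongr; exact hs.2.trans (le_abs_self t₀)
  exact mul_le_mul_of_nonneg_left (Real.exp_le_exp.2 hωs) (by linarith)

section Limits

variable {α : Type*} {l : Filter α}

theorem tendsto_apply_of_tendsto (h𝒯 : IsBiContSotSemigroup 𝒯) (C : E →L[ℝ] E) (x : E)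
    {τ : α → ℝ} {s : ℝ} (hs : 0 ≤ s) (hτ : Tendsto τ l (𝓝 s)) (hτ0 : ∀ᶠ a in l, 0 ≤ τ a) :
    Tendsto (fun a => 𝒯 (τ a) C x) l (𝓝 (𝒯 s C x)) :=
  ((h𝒯.strongCont C x) s hs).tendsto.comp (tendsto_nhdsWithin_iff.2 ⟨hτ, hτ0⟩)

theorem tendsto_apply_apply_zero (h𝒯 : IsBiContSotSemigroup 𝒯) [l.IsCountablyGenerated]
    {A : α → E →L[ℝ] E} {τ : α → ℝ} {c t₀ : ℝ}
    (hA : ∀ y, Tendsto (fun a => A a y) l (𝓝 0)) (hAc : ∀ᶠ a in l, ‖A a‖ ≤ c)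
    (hτ : ∀ᶠ a in l, τ a ∈ Icc 0 t₀) (x : E) :
    Tendsto (fun a => 𝒯 (τ a) (A a) x) l (𝓝 0) := by
  refine tendsto_of_seq_tendsto fun φ hφ => ?_
  obtain ⟨N, hN⟩ := eventually_atTop.1 (hφ.eventually (hAc.and hτ))
  rw [← tendsto_add_atTop_iff_nat N, Metric.tendsto_atTop]
  intro ε hε
  obtain ⟨M, hM⟩ := h𝒯.biequi (max t₀ 1) (by positivity) (fun n => A (φ (n + N)))
    ⟨c, fun n => (hN _ (Nat.le_add_left N n)).1⟩
    (fun y => (hA y).comp (hφ.comp (tendsto_add_atTop_nat N))) x ε hε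
  refine ⟨M, fun n hn => ?_⟩
  obtain ⟨-, hτ0, hτt₀⟩ := hN (n + N) (Nat.le_add_left N n)
  simpa using hM n hn _ ⟨hτ0, hτt₀.trans (le_max_left _ _)⟩

/-- Bi-equicontinuity upgrades strong continuity to joint sequential continuity of
`(t, C) ↦ 𝒯 t C` on norm-bounded sets of `(𝓛(E), τ_sot)`. -/
theorem tendsto_apply_apply (h𝒯 : IsBiContSotSemigroup 𝒯) [l.IsCountablyGenerated]
    {A : α → E →L[ℝ] E} {W : E →L[ℝ] E} {τ : α → ℝ} {s c : ℝ}
    (hA : ∀ y, Tendsto (fun a => A a y) l (𝓝 (W y))) (hAc : ∀ᶠ a in l, ‖A a‖ ≤ c)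
    (hs : 0 ≤ s) (hτ : Tendsto τ l (𝓝 s)) (hτ0 : ∀ᶠ a in l, 0 ≤ τ a) (x : E) :
    Tendsto (fun a => 𝒯 (τ a) (A a) x) l (𝓝 (𝒯 s W x)) := by
  have hnull := h𝒯.tendsto_apply_apply_zero (A := fun a => A a - W) (c := c + ‖W‖)
    (t₀ := s + 1) (fun y => by simpa using (hA y).sub_const (W y))
    (hAc.mono fun a ha => (norm_sub_le _ _).trans (by linarith))
    (hτ0.and (hτ.eventually (eventually_le_nhds (lt_add_one s)))) x
  simpa using hnull.add (h𝒯.tendsto_apply_of_tendsto W x hs hτ hτ0)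

end Limits


theorem sotGenRel_apply (h𝒯 : IsBiContSotSemigroup 𝒯) {C Y : E →L[ℝ] E} (hC : SotGenRel 𝒯 C Y)
    {s : ℝ} (hs : 0 ≤ s) : SotGenRel 𝒯 (𝒯 s C) (𝒯 s Y) := by
  obtain ⟨M, hM⟩ := hC.exists_eventually_norm_le
  refine ⟨fun x => ?_, ?_⟩
  · refine (h𝒯.tendsto_apply_apply hC.tendsto_smul_sub hM hs tendsto_const_nhds
      (Eventually.of_forall fun _ => hs) x).congr' ?_
    filter_upwards [self_mem_nhdsWithin] with h (hh : 0 < h)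
    simp [h𝒯.apply_comm hh.le hs, smul_sub]
  · obtain ⟨M, hM⟩ := hC.2
    refine ⟨‖𝒯 s‖ * M, fun h hh => ?_⟩
    rw [h𝒯.apply_comm hh.1.le hs, ← map_sub, mul_assoc]
    exact (𝒯 s).le_opNorm_of_le (hM h hh)

theorem continuousOn_apply_sub_comp (h𝒯 : IsBiContSotSemigroup 𝒯) (C B : E →L[ℝ] E) (t : ℝ)
    (x : E) : ContinuousOn (fun s => 𝒯 (t - s) ((𝒯 s C).comp B) x) (Icc 0 t) := by
  intro s hs
  obtain ⟨K, -, hK⟩ := h𝒯.exists_norm_le t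
  have hid : Tendsto (fun u => u) (𝓝[Icc 0 t] s) (𝓝 s) := tendsto_id.mono_left nhdsWithin_le_nhds
  refine h𝒯.tendsto_apply_apply (A := fun u => (𝒯 u C).comp B) (τ := fun u => t - u)
    (c := K * ‖C‖ * ‖B‖) (fun y => ?_) ?_ (by linarith [hs.2])
    (tendsto_const_nhds.sub hid) ?_ x
  · exact h𝒯.tendsto_apply_of_tendsto C (B y) hs.1 hid
      (eventually_nhdsWithin_of_forall fun u hu => hu.1)
  · filter_upwards [self_mem_nhdsWithin] with u hu
    exact (ContinuousLinearMap.opNorm_comp_le _ _).trans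
      (by gcongr; exact (𝒯 u).le_of_opNorm_le (hK u hu) C)
  · filter_upwards [self_mem_nhdsWithin] with u hu
    linarith [hu.2]

theorem hasDerivWithinAt_apply_sub_comp (h𝒯 : IsBiContSotSemigroup 𝒯)
    (H : GeneratorIsRightModuleHom 𝒯) {C Y : E →L[ℝ] E} (hC : SotGenRel 𝒯 C Y)
    (B : E →L[ℝ] E) {s t : ℝ} (hs : s ∈ Ico 0 t) (x : E) :
    HasDerivWithinAt (fun u => 𝒯 (t - u) ((𝒯 u C).comp B) x) 0 (Ici s) s := by
  set D := 𝒯 s C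
  have hD : SotGenRel 𝒯 D (𝒯 s Y) := h𝒯.sotGenRel_apply hC hs.1
  have hDB := H D _ hD B
  obtain ⟨M₁, hM₁⟩ := hD.exists_eventually_norm_le
  obtain ⟨M₂, hM₂⟩ := hDB.exists_eventually_norm_le
  have hshift : Tendsto (fun u => u - s) (𝓝[>] s) (𝓝[>] 0) :=
    tendsto_nhdsWithin_iff.2
      ⟨((continuous_sub_right s).tendsto' s 0 (sub_self s)).mono_left nhdsWithin_le_nhds,
        eventually_nhdsWithin_of_forall fun u (hu : s < u) => sub_pos.2 hu⟩
  have hid : Tendsto (fun u => u) (𝓝[>] s) (𝓝 s) := tendsto_id.mono_left nhdsWithin_le_nhds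
  have hlt : ∀ᶠ u in 𝓝[>] s, u < t := hid.eventually (eventually_lt_nhds hs.2)
  set A : ℝ → E →L[ℝ] E := fun u => ((u - s)⁻¹ • (𝒯 (u - s) D - D)).comp B
    - (u - s)⁻¹ • (𝒯 (u - s) (D.comp B) - D.comp B)
  have hA : ∀ y, Tendsto (fun u => A u y) (𝓝[>] s) (𝓝 ((0 : E →L[ℝ] E) y)) := fun y => by
    simpa [A] using ((hD.tendsto_smul_sub (B y)).comp hshift).sub
      ((hDB.tendsto_smul_sub y).comp hshift)
  have hAc : ∀ᶠ u in 𝓝[>] s, ‖A u‖ ≤ M₁ * ‖B‖ + M₂ := by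
    filter_upwards [hshift.eventually hM₁, hshift.eventually hM₂] with u h₁ h₂
    refine (norm_sub_le _ _).trans (add_le_add ?_ h₂)
    exact (ContinuousLinearMap.opNorm_comp_le _ _).trans (by gcongr)
  have hlim := h𝒯.tendsto_apply_apply (τ := fun u => t - u) hA hAc (by linarith [hs.2])
    (tendsto_const_nhds.sub hid)
    (hlt.mono fun u hu => by linarith) x
  rw [_root_.map_zero, zero_apply] at hlim
  rw [hasDerivWithinAt_iff_tendsto_slope, Ici_sdiff_left]
  refine hlim.congr' ?_
  filter_upwards [self_mem_nhdsWithin, hlt] with u (hsu : s < u) hut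
  have hus : 0 ≤ u - s := by linarith
  have hD_u : 𝒯 u C = 𝒯 (u - s) D := by
    rw [← h𝒯.apply_add hus hs.1, sub_add_cancel]
  have hD_t : 𝒯 (t - s) ((𝒯 s C).comp B) = 𝒯 (t - u) (𝒯 (u - s) (D.comp B)) := by
    rw [← h𝒯.apply_add (by linarith) hus, sub_add_sub_cancel]
  simp only [A, slope_def_module, hD_u, hD_t, ContinuousLinearMap.sub_comp,
    ContinuousLinearMap.smul_comp, map_sub, map_smul, sub_apply,
    smul_apply]
  module

theorem apply_comp_of_sotGenRel (h𝒯 : IsBiContSotSemigroup 𝒯) (H : GeneratorIsRightModuleHom 𝒯)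
    {C Y : E →L[ℝ] E} (hC : SotGenRel 𝒯 C Y) (B : E →L[ℝ] E) {t : ℝ} (ht : 0 ≤ t) :
    𝒯 t (C.comp B) = (𝒯 t C).comp B := by
  ext x
  have hconst := constant_of_has_deriv_right_zero (h𝒯.continuousOn_apply_sub_comp C B t x)
    (fun s hs => h𝒯.hasDerivWithinAt_apply_sub_comp H hC B hs x) t (right_mem_Icc.2 ht)
  simpa [h𝒯.map_zero] using hconst.symm

/-- `∫₀ʳ 𝒯(s)C ds` in `τ_sot`. Integrating over `Ioc 0 r` never evaluates `𝒯` at negative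
times, so the map is linear for every `r`, and it vanishes for `r ≤ 0`. -/
noncomputable def orbitIntegral (h𝒯 : IsBiContSotSemigroup 𝒯) (C : E →L[ℝ] E) (r : ℝ) :
    E →L[ℝ] E :=
  have hint : ∀ x, IntegrableOn (fun s => 𝒯 s C x) (Ioc 0 r) := fun x =>
    ((h𝒯.strongCont C x).mono Icc_subset_Ici_self).integrableOn_Icc.mono_set Ioc_subset_Icc_self
  LinearMap.mkContinuousOfExistsBound
    { toFun := fun x => ∫ s in Ioc 0 r, 𝒯 s C x
      map_add' := fun x y => by simp only [_root_.map_add, integral_add (hint x) (hint y)]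
      map_smul' := fun c x => by simp only [map_smul, integral_smul, RingHom.id_apply] }
    (by
      obtain ⟨K, -, hK⟩ := h𝒯.exists_norm_le r
      refine ⟨K * ‖C‖ * volume.real (Ioc 0 r), fun x => ?_⟩
      have hKs : ∀ s ∈ Ioc 0 r, ‖𝒯 s C x‖ ≤ K * ‖C‖ * ‖x‖ := fun s hs =>
        (𝒯 s C).le_of_opNorm_le ((𝒯 s).le_of_opNorm_le (hK s (Ioc_subset_Icc_self hs)) C) x
      exact (norm_setIntegral_le_of_norm_le_const measure_Ioc_lt_top hKs).trans_eq (by ring))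

theorem orbitIntegral_apply (h𝒯 : IsBiContSotSemigroup 𝒯) (C : E →L[ℝ] E) {r : ℝ} (hr : 0 ≤ r)
    (x : E) : h𝒯.orbitIntegral C r x = ∫ s in 0..r, 𝒯 s C x :=
  (intervalIntegral.integral_of_le hr).symm

theorem norm_orbitIntegral_le (h𝒯 : IsBiContSotSemigroup 𝒯) {K r : ℝ} (hK0 : 0 ≤ K)
    (hK : ∀ s ∈ Icc 0 r, ‖𝒯 s‖ ≤ K) (C : E →L[ℝ] E) (hr : 0 ≤ r) :
    ‖h𝒯.orbitIntegral C r‖ ≤ K * ‖C‖ * r :=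
  ContinuousLinearMap.opNorm_le_bound _ (by positivity) fun x => by
    rw [h𝒯.orbitIntegral_apply C hr]
    exact (norm_integral_apply_le hK C x le_rfl hr le_rfl).trans_eq (by ring)

theorem apply_orbitIntegral [CompleteSpace E] (h𝒯 : IsBiContSotSemigroup 𝒯) (C : E →L[ℝ] E)
    {r t : ℝ} (hr : 0 ≤ r) (ht : 0 ≤ t) (x : E) :
    𝒯 t (h𝒯.orbitIntegral C r) x = ∫ s in 0..r, 𝒯 (t + s) C x := by
  obtain ⟨K, hK0, hK⟩ := h𝒯.exists_norm_le r
  -- `𝒯 t` is only sequentially `τ_sot`-continuous on bounded sets, so it is moved inside the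
  -- integral along Riemann sums.
  set R : ℕ → E →L[ℝ] E := fun n => (r / n) • ∑ i ∈ Finset.range n, 𝒯 (i * (r / n)) C
  have hnode : ∀ n : ℕ, ∀ i ∈ Finset.range n, (i : ℝ) * (r / n) ∈ Icc 0 r := by
    intro n i hi
    have hin : i < n := Finset.mem_range.1 hi
    have hn : (0 : ℝ) < n := by exact_mod_cast hin.pos
    refine ⟨by positivity, ?_⟩
    calc (i : ℝ) * (r / n) ≤ n * (r / n) := by gcongr
      _ = r := mul_div_cancel₀ r hn.ne'
  have hR : ∀ y, Tendsto (fun n => R n y) atTop (𝓝 (h𝒯.orbitIntegral C r y)) := fun y => by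
    simpa [R, h𝒯.orbitIntegral_apply C hr] using
      tendsto_riemannSum_integral hr ((h𝒯.strongCont C y).mono Icc_subset_Ici_self)
  have hRc : ∀ n, ‖R n‖ ≤ r * (K * ‖C‖) := by
    intro n
    rcases (Nat.cast_nonneg n : (0 : ℝ) ≤ n).eq_or_lt with hn | hn
    · simp [R, ← hn]
      positivity
    calc ‖R n‖ ≤ r / n * ∑ i ∈ Finset.range n, ‖𝒯 (i * (r / n)) C‖ := by
          rw [norm_smul, Real.norm_of_nonneg (by positivity)]
          gcongr
          exact norm_sum_le _ _
      _ ≤ r / n * ∑ _i ∈ Finset.range n, K * ‖C‖ := by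
          gcongr with i hi
          exact (𝒯 _).le_of_opNorm_le (hK _ (hnode n i hi)) C
      _ = r * (K * ‖C‖) := by
          rw [Finset.sum_const, Finset.card_range, nsmul_eq_mul]
          field_simp
  have hlim := h𝒯.tendsto_apply_apply hR (Eventually.of_forall hRc) ht tendsto_const_nhds
    (Eventually.of_forall fun _ => ht) x
  have hcont : ContinuousOn (fun s => 𝒯 (t + s) C x) (Icc 0 r) :=
    (h𝒯.strongCont C x).comp (continuous_const_add t).continuousOn
      fun s hs => show 0 ≤ t + s by linarith [hs.1]
  refine tendsto_nhds_unique hlim ((tendsto_riemannSum_integral hr hcont).congr fun n => ?_)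
  simp only [R, sub_zero, zero_add, map_smul, map_sum, smul_apply, sum_apply]
  congr 1
  exact Finset.sum_congr rfl fun i hi => by rw [h𝒯.apply_add ht (hnode n i hi).1]

theorem sotGenRel_orbitIntegral [CompleteSpace E] (h𝒯 : IsBiContSotSemigroup 𝒯)
    (C : E →L[ℝ] E) {r : ℝ} (hr : 0 ≤ r) :
    SotGenRel 𝒯 (h𝒯.orbitIntegral C r) (𝒯 r C - C) := by
  have hint : ∀ x {a b : ℝ}, 0 ≤ a → 0 ≤ b →
      IntervalIntegrable (fun s => 𝒯 s C x) volume a b := fun x a b ha hb =>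
    ((h𝒯.strongCont C x).mono fun s hs => (le_min ha hb).trans hs.1).intervalIntegrable
  have hdiff : ∀ h, 0 ≤ h → ∀ x, 𝒯 h (h𝒯.orbitIntegral C r) x - h𝒯.orbitIntegral C r x
      = (∫ s in r..r + h, 𝒯 s C x) - ∫ s in 0..h, 𝒯 s C x := by
    intro h hh x
    rw [h𝒯.apply_orbitIntegral C hr hh, h𝒯.orbitIntegral_apply C hr,
      intervalIntegral.integral_comp_add_left (fun s => 𝒯 s C x) h, add_zero,
      intervalIntegral.integral_interval_sub_interval_comm' (hint x hh (by linarith))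
        (hint x le_rfl hr) (hint x hh le_rfl), add_comm]
  obtain ⟨K, hK0, hK⟩ := h𝒯.exists_norm_le (r + 1)
  refine ⟨fun x => ?_, ⟨2 * (K * ‖C‖), fun h hh => ?_⟩⟩
  · have hcont := h𝒯.strongCont C x
    have hlim := (tendsto_inv_smul_integral_add (hcont.mono (Ici_subset_Ici.2 hr))).sub
      (tendsto_inv_smul_integral_add (a := 0) hcont)
    simp only [zero_add, h𝒯.map_zero, one_apply_eq_self] at hlim
    refine hlim.congr' ?_
    filter_upwards [self_mem_nhdsWithin] with h (hh : 0 < h)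
    rw [hdiff h hh.le x, smul_sub]
  · refine ContinuousLinearMap.opNorm_le_bound _ (by positivity [hh.1]) fun x => ?_
    rw [sub_apply, hdiff h hh.1.le x]
    refine (norm_sub_le _ _).trans ?_
    have h₁ := norm_integral_apply_le hK C x (b := r + h) hr (by linarith [hh.1])
      (by linarith [hh.2])
    have h₂ := norm_integral_apply_le hK C x (b := h) le_rfl hh.1.le (by linarith [hh.2])
    linarith

theorem apply_comp [CompleteSpace E] (h𝒯 : IsBiContSotSemigroup 𝒯)
    (H : GeneratorIsRightModuleHom 𝒯) (C B : E →L[ℝ] E) {t : ℝ} (ht : 0 ≤ t) :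
    𝒯 t (C.comp B) = (𝒯 t C).comp B := by
  ext x
  obtain ⟨K, hK0, hK⟩ := h𝒯.exists_norm_le 1
  set A : ℝ → E →L[ℝ] E := fun r => r⁻¹ • h𝒯.orbitIntegral C r
  have hA : ∀ y, Tendsto (fun r => A r y) (𝓝[>] 0) (𝓝 (C y)) := by
    intro y
    have hlim := tendsto_inv_smul_integral_add (a := 0) (h𝒯.strongCont C y)
    simp only [zero_add, h𝒯.map_zero, one_apply_eq_self] at hlim
    refine hlim.congr' ?_
    filter_upwards [self_mem_nhdsWithin] with r (hr : 0 < r)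
    rw [smul_apply, h𝒯.orbitIntegral_apply C hr.le]
  have hAc : ∀ᶠ r in 𝓝[>] 0, ‖A r‖ ≤ K * ‖C‖ := by
    filter_upwards [Ioc_mem_nhdsGT one_pos] with r hr
    rw [norm_smul, norm_inv, Real.norm_of_nonneg hr.1.le, inv_mul_le_iff₀ hr.1, mul_comm]
    exact h𝒯.norm_orbitIntegral_le hK0 (fun s hs => hK s ⟨hs.1, hs.2.trans hr.2⟩) C hr.1.le
  have hAB : ∀ᶠ r in 𝓝[>] 0, 𝒯 t ((A r).comp B) x = 𝒯 t (A r) (B x) := by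
    filter_upwards [self_mem_nhdsWithin] with r (hr : 0 < r)
    rw [h𝒯.apply_comp_of_sotGenRel H ((h𝒯.sotGenRel_orbitIntegral C hr.le).smul _) B ht]
    rfl
  have hcomp := h𝒯.tendsto_apply_apply (A := fun r => (A r).comp B) (W := C.comp B)
    (c := K * ‖C‖ * ‖B‖) (fun y => hA (B y))
    (hAc.mono fun r hr => (ContinuousLinearMap.opNorm_comp_le _ _).trans (by gcongr)) ht
    tendsto_const_nhds (Eventually.of_forall fun _ => ht) x
  exact tendsto_nhds_unique (hcomp.congr' hAB) (h𝒯.tendsto_apply_apply hA hAc ht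
    tendsto_const_nhds (Eventually.of_forall fun _ => ht) (B x))

theorem isLeftImplementedBy_apply_one [CompleteSpace E] (h𝒯 : IsBiContSotSemigroup 𝒯)
    (H : GeneratorIsRightModuleHom 𝒯) : IsLeftImplementedBy 𝒯 fun t => 𝒯 t 1 :=
  fun t ht C => by simpa [ContinuousLinearMap.one_def] using h𝒯.apply_comp H 1 C ht

theorem isC0Semigroup_apply_one [CompleteSpace E] (h𝒯 : IsBiContSotSemigroup 𝒯)
    (H : GeneratorIsRightModuleHom 𝒯) : IsC0Semigroup fun t => 𝒯 t 1 where
  map_zero := by rw [h𝒯.map_zero]; rfl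
  map_add s t hs ht := by rw [h𝒯.apply_add hs ht, h𝒯.isLeftImplementedBy_apply_one H s hs]
  strongCont := h𝒯.strongCont 1

end IsBiContSotSemigroup

theorem IsLeftImplementedBy.generatorIsRightModuleHom {S : ℝ → E →L[ℝ] E}
    (hS : IsLeftImplementedBy 𝒯 S) : GeneratorIsRightModuleHom 𝒯 := by
  intro C Y hC B
  obtain ⟨M, hM⟩ := hC.2
  refine ⟨fun x => (hC.1 (B x)).congr' ?_, ⟨M * ‖B‖, fun h hh => ?_⟩⟩
  · filter_upwards [self_mem_nhdsWithin] with h (hh : 0 < h)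
    rw [hS h hh.le, hS h hh.le]
    rfl
  · rw [hS h hh.1.le, ← ContinuousLinearMap.comp_assoc, ← ContinuousLinearMap.sub_comp,
      ← hS h hh.1.le, mul_right_comm]
    exact (ContinuousLinearMap.opNorm_comp_le _ _).trans (by gcongr; exact hM h hh)

theorem IsLeftImplementedBy.eq_apply_one {S : ℝ → E →L[ℝ] E} (hS : IsLeftImplementedBy 𝒯 S)
    {t : ℝ} (ht : 0 ≤ t) : S t = 𝒯 t 1 := by
  rw [hS t ht 1, ContinuousLinearMap.one_def, ContinuousLinearMap.comp_id]

/-- For a `τ_sot`-bi-continuous semigroup `𝒯` on `𝓛(E)` with generator `𝒜`: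
`dom 𝒜` is a right ideal and `𝒜` a right `𝓛(E)`-module homomorphism iff `𝒯` is left
implemented by a `C₀`-semigroup `S` on `E`; and in that case `S(t) = 𝒯(t)(Id)`. -/
theorem stmt_5 [CompleteSpace E]
    (𝒯 : ℝ → (E →L[ℝ] E) →L[ℝ] (E →L[ℝ] E)) (h𝒯 : IsBiContSotSemigroup 𝒯) :
    ((∀ (C Y : E →L[ℝ] E), SotGenRel 𝒯 C Y →
        ∀ B : E →L[ℝ] E, SotGenRel 𝒯 (C.comp B) (Y.comp B)) ↔
      (∃ S : ℝ → E →L[ℝ] E, IsC0Semigroup S ∧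
        ∀ t : ℝ, 0 ≤ t → ∀ C : E →L[ℝ] E, 𝒯 t C = (S t).comp C)) ∧
    ∀ S : ℝ → E →L[ℝ] E, IsC0Semigroup S →
      (∀ t : ℝ, 0 ≤ t → ∀ C : E →L[ℝ] E, 𝒯 t C = (S t).comp C) →
      ∀ t : ℝ, 0 ≤ t → S t = 𝒯 t 1 :=
  ⟨⟨fun H => ⟨_, h𝒯.isC0Semigroup_apply_one H, h𝒯.isLeftImplementedBy_apply_one H⟩,
      fun ⟨_, _, hS⟩ => IsLeftImplementedBy.generatorIsRightModuleHom hS⟩,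
    fun _ _ hS _ ht => IsLeftImplementedBy.eq_apply_one hS ht⟩
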